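/- arXiv:1212.5216 — 2 statements merged into one kernel-verified Lean document; each statement's English description precedes it below -/
import Mathlib

section
/- For every k ≥ 1, limsup_{t→∞} |{w ∈ (X∪X⁻¹)^t : w reduces to the identity of F_k}|^{1/t} = 2√(2k−1); that is, the number of words of length t in the letters x₁^{±1},…,x_k^{±1} representing the trivial element of the free group F_k has exponential growth rate exactly 2√(2k−1). -/
open scoped Classical

noncomputable section

namespace Paper

/-! ### Free groups: bases, primitivity, primitivity rank, critical subgroups -/

/-- `S` is a free basis of the subgroup `H` of `G`: the canonical homomorphism from the free
group on `S` to `G` is injective with image `H`. -/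
def IsFreeBasisOf {G : Type*} [Group G] (S : Set G) (H : Subgroup G) : Prop :=
  Function.Injective ⇑(FreeGroup.lift (fun s : S => (s : G))) ∧
    (FreeGroup.lift (fun s : S => (s : G))).range = H

/-- `w` is primitive in `H` if it belongs to some free basis of `H`. -/
def IsPrimitiveIn {G : Type*} [Group G] (w : G) (H : Subgroup G) : Prop :=
  ∃ S : Set G, IsFreeBasisOf S H ∧ w ∈ S

/-- The rank of a subgroup of a free group, as the infimum of the cardinalities of its free
bases (`⊤` if there is no free basis). -/
def subgroupRank {G : Type*} [Group G] (H : Subgroup G) : ℕ∞ :=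
  ⨅ S ∈ {S : Set G | IsFreeBasisOf S H}, S.encard

/-- The primitivity rank `π(w)`: the minimal rank of a subgroup of `G` in which `w` is
not primitive (`⊤`, i.e. `∞`, if `w` is primitive in every subgroup containing it). -/
def primRank {G : Type*} [Group G] (w : G) : ℕ∞ :=
  ⨅ J ∈ {J : Subgroup G | w ∈ J ∧ ¬IsPrimitiveIn w J}, subgroupRank J

/-- The set `Crit w` of `w`-critical subgroups: subgroups attaining the minimum in the
definition of the primitivity rank. -/
def Crit {G : Type*} [Group G] (w : G) : Set (Subgroup G) :=
  {J | w ∈ J ∧ ¬IsPrimitiveIn w J ∧ subgroupRank J = primRank w}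

/-- `H` is a free factor of `J`: some free basis of `H` extends to a free basis of `J`. -/
def IsFreeFactorOf {G : Type*} [Group G] (H J : Subgroup G) : Prop :=
  ∃ S T : Set G, S ⊆ T ∧ IsFreeBasisOf S H ∧ IsFreeBasisOf T J

/-- `J` is an algebraic extension of `H`: `H ≤ J` and no intermediate subgroup
`H ≤ L ⪇ J` is a proper free factor of `J`. -/
def IsAlgebraicExt {G : Type*} [Group G] (H J : Subgroup G) : Prop :=
  H ≤ J ∧ ∀ L : Subgroup G, H ≤ L → IsFreeFactorOf L J → L = J

/-! ### Words in the letters `x₁^{±1},…,x_k^{±1}` -/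

/-- The element of the free group given by a single (possibly inverted) letter. -/
def letter {k : ℕ} (p : Fin k × Bool) : FreeGroup (Fin k) :=
  if p.2 then FreeGroup.of p.1 else (FreeGroup.of p.1)⁻¹

/-- The element of the free group spelled by a (not necessarily reduced) word of length `t`. -/
def wordElem {k t : ℕ} (w : Fin t → Fin k × Bool) : FreeGroup (Fin k) :=
  (List.ofFn fun i => letter (w i)).prod

/-- The permutation `w(σ₁,…,σ_k) = σ_{j₁}^{ε₁}⋯σ_{j_t}^{ε_t}`, composed left to right. -/
def wordPerm {k t : ℕ} (n : ℕ) (w : Fin t → Fin k × Bool)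
    (σ : Fin k → Equiv.Perm (Fin n)) : Equiv.Perm (Fin n) :=
  ((List.ofFn fun i => if (w i).2 then σ (w i).1 else (σ (w i).1)⁻¹).reverse).prod

/-- The number of fixed points of a permutation of `{1,…,n}`. -/
def numFixedPts {n : ℕ} (τ : Equiv.Perm (Fin n)) : ℕ :=
  (Finset.univ.filter fun x => τ x = x).card

/-- `E[F_{w,n}]`: the expected number of fixed points of `w(σ₁,…,σ_k)`, where
`σ₁,…,σ_k` are independent uniformly random permutations of `{1,…,n}`. -/
def EFix (n : ℕ) {k t : ℕ} (w : Fin t → Fin k × Bool) : ℝ :=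
  (∑ σ : Fin k → Equiv.Perm (Fin n), (numFixedPts (wordPerm n w σ) : ℝ)) /
    (Fintype.card (Fin k → Equiv.Perm (Fin n)) : ℝ)

/-- the number of reduced words of length `t` in `F_k` with primitivity rank `m` -/
def ckm (k : ℕ) (m : ℕ∞) (t : ℕ) : ℕ :=
  {w : FreeGroup (Fin k) | (FreeGroup.toWord w).length = t ∧ primRank w = m}.ncard

/-- the number of not-necessarily-reduced words of length `t` with primitivity rank `m` -/
def bkm (k : ℕ) (m : ℕ∞) (t : ℕ) : ℕ :=
  {w : Fin t → Fin k × Bool | primRank (wordElem w) = m}.ncard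

/-- `Σ_{w reduced, |w| = t, π(w) = m} |Crit(w)|` -/
def critSumReduced (k : ℕ) (m : ℕ∞) (t : ℕ) : ℝ :=
  ∑ᶠ w ∈ {w : FreeGroup (Fin k) | (FreeGroup.toWord w).length = t ∧ primRank w = m},
    ((Crit w).ncard : ℝ)

/-- `Σ_{w ∈ (X∪X⁻¹)^t, π(w) = m} |Crit(w)|` -/
def critSumWords (k : ℕ) (m : ℕ∞) (t : ℕ) : ℝ :=
  ∑ᶠ w ∈ {w : Fin t → Fin k × Bool | primRank (wordElem w) = m},
    ((Crit (wordElem w)).ncard : ℝ)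

/-! ### Finite multigraphs with oriented labeled edges -/

/-- A finite multigraph (loops and multiple edges allowed) with `k` edges, each oriented,
labeled by `x₁,…,x_k`; edge `e` goes from `src e` to `tgt e`. -/
structure MultiGraph where
  V : Type
  [fintypeV : Fintype V]
  k : ℕ
  src : Fin k → V
  tgt : Fin k → V

attribute [instance] MultiGraph.fintypeV

namespace MultiGraph

variable (G : MultiGraph)

/-- The initial vertex of a directed step (an edge together with a direction). -/
def stepStart (s : Fin G.k × Bool) : G.V := if s.2 then G.src s.1 else G.tgt s.1

/-- The terminal vertex of a directed step. -/
def stepEnd (s : Fin G.k × Bool) : G.V := if s.2 then G.tgt s.1 else G.src s.1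

def Adjacent (u v : G.V) : Prop :=
  ∃ e : Fin G.k, (G.src e = u ∧ G.tgt e = v) ∨ (G.src e = v ∧ G.tgt e = u)

/-- The graph is connected (and nonempty). -/
def Connected : Prop :=
  Nonempty G.V ∧ ∀ u v : G.V, Relation.ReflTransGen G.Adjacent u v

/-- `IsPathFrom u v l`: the list of directed steps `l` forms a path from `u` to `v`. -/
def IsPathFrom : G.V → G.V → List (Fin G.k × Bool) → Prop
  | u, v, [] => u = v
  | u, v, s :: l => G.stepStart s = u ∧ IsPathFrom (G.stepEnd s) v l

/-- The word in `F_k` spelled by a path. -/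
def pathWord (l : List (Fin G.k × Bool)) : FreeGroup (Fin G.k) :=
  (l.map letter).prod

/-- The permutation `w(σ₁,…,σ_k)` (composed left to right) spelled by a path. -/
def pathPerm {n : ℕ} (l : List (Fin G.k × Bool)) (σ : Fin G.k → Equiv.Perm (Fin n)) :
    Equiv.Perm (Fin n) :=
  ((l.map fun s => if s.2 then σ s.1 else (σ s.1)⁻¹).reverse).prod

/-- `CP t`: closed paths of length `t` in `G` (a basepoint with a path from it to itself). -/
def CP (t : ℕ) : Set (G.V × List (Fin G.k × Bool)) :=
  {p | p.2.length = t ∧ G.IsPathFrom p.1 p.1 p.2}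

/-- `CP⁰_t`: closed paths of length `t` whose word reduces to the identity. -/
def CP0 (t : ℕ) : Set (G.V × List (Fin G.k × Bool)) :=
  {p ∈ G.CP t | G.pathWord p.2 = 1}

/-- `CP^m_t`: closed paths of length `t` whose word has primitivity rank `m`. -/
def CPm (t : ℕ) (m : ℕ∞) : Set (G.V × List (Fin G.k × Bool)) :=
  {p ∈ G.CP t | primRank (G.pathWord p.2) = m}

/-- The degree of a vertex (a loop contributes 2). -/
def deg (v : G.V) : ℕ :=
  ∑ e : Fin G.k, ((if G.src e = v then 1 else 0) + (if G.tgt e = v then 1 else 0))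

/-- The rank of the fundamental group of a connected graph: `|E| − |V| + 1`. -/
def rk : ℕ := G.k + 1 - Fintype.card G.V

/-- The spectral radius of the adjacency operator of the universal covering tree of `G`,
via its combinatorial characterization as the exponential growth rate of the number of
closed paths whose word reduces to the identity. -/
def rhoA : ℝ :=
  Filter.limsup (fun t : ℕ => ((G.CP0 t).ncard : ℝ) ^ (1 / (t : ℝ))) Filter.atTop

/-- The Markov weight of a path: the product of `1/deg` over the vertices it leaves. -/
def pathWeight : List (Fin G.k × Bool) → ℝ
  | [] => 1
  | s :: l => (1 / (G.deg (G.stepStart s) : ℝ)) * pathWeight l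

/-- The spectral radius of the Markov operator of the universal covering tree of `G`,
via its combinatorial characterization. -/
def rhoM : ℝ :=
  Filter.limsup (fun t : ℕ => (∑ᶠ p ∈ G.CP0 t, G.pathWeight p.2) ^ (1 / (t : ℝ)))
    Filter.atTop

/-- The subgroup `J_v ≤ F_k` of words of closed paths at the vertex `v`. -/
def Jv (v : G.V) : Subgroup (FreeGroup (Fin G.k)) :=
  Subgroup.closure {g | ∃ l, G.IsPathFrom v v l ∧ G.pathWord l = g}

/-- The exponential growth rate of `Σ_{w ∈ CP_t^m(G)} |Crit(w)|`. -/
def critSumGrowth (m : ℕ∞) : ℝ :=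
  Filter.limsup (fun t : ℕ =>
    (∑ᶠ p ∈ G.CPm t m, ((Crit (G.pathWord p.2)).ncard : ℝ)) ^ (1 / (t : ℝ))) Filter.atTop

/-- The adjacency matrix of the `n`-covering of `G` determined by the permutations `σ`. -/
def covAdj (n : ℕ) (σ : Fin G.k → Equiv.Perm (Fin n)) :
    Matrix (G.V × Fin n) (G.V × Fin n) ℝ := fun p q =>
  ∑ e : Fin G.k,
    ((if G.src e = p.1 ∧ G.tgt e = q.1 ∧ σ e p.2 = q.2 then (1 : ℝ) else 0) +
      (if G.src e = q.1 ∧ G.tgt e = p.1 ∧ σ e q.2 = p.2 then (1 : ℝ) else 0))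

/-- The Markov operator of the `n`-covering of `G` determined by the permutations `σ`. -/
def covMarkov (n : ℕ) (σ : Fin G.k → Equiv.Perm (Fin n)) :
    Matrix (G.V × Fin n) (G.V × Fin n) ℝ := fun p q =>
  G.covAdj n σ p q / (G.deg p.1 : ℝ)

end MultiGraph

/-! ### Spectral quantities -/

/-- The largest absolute value of a *new* eigenvalue of a symmetric operator on a covering:
the supremum of `|μ|` over eigenvalues `μ` admitting an eigenvector summing to zero on
every fiber `{v} × {1,…,n}`. -/
def lamNew {V : Type*} [Fintype V] {n : ℕ} (A : Matrix (V × Fin n) (V × Fin n) ℝ) : ℝ :=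
  sSup {x : ℝ | ∃ (μ : ℝ) (f : V × Fin n → ℝ), x = |μ| ∧ f ≠ 0 ∧
    (∀ v : V, ∑ i : Fin n, f (v, i) = 0) ∧ A.mulVec f = μ • f}

/-- The largest absolute value of a *non-trivial* eigenvalue of a symmetric matrix:
the supremum of `|μ|` over eigenvalues `μ` admitting an eigenvector whose coordinates
sum to zero. -/
def lam0 {N : Type*} [Fintype N] (A : Matrix N N ℝ) : ℝ :=
  sSup {x : ℝ | ∃ (μ : ℝ) (f : N → ℝ), x = |μ| ∧ f ≠ 0 ∧
    (∑ i : N, f i = 0) ∧ A.mulVec f = μ • f}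

end Paper

/-!
Multiplying by a letter moves an element of `F_k` to a neighbour in its Cayley graph, the
`2k`-regular tree. Hence the number of words of length `t` spelling `g` only depends on the
distance `|g|` of `g` from the root, and obeys the recursion of walks in the tree projected to
the distance from the root.

Lower bound: a closed walk whose distance profile is a Dyck path of length `2n` has at least
`2k - 1` choices at each of its `n` outward steps, so there are at least
`catalan n * (2k - 1)^n ≥ (4 (2k - 1))^n / (2n + 1)^2` of them.
Upper bound: `ψ m = ((k - 1) m + k) / √(2k - 1)^m` satisfies `Pψ ≤ 2√(2k - 1) ψ` for the
one-step operator `P` of the distance process (with equality away from the root), which gives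
at most `k (2√(2k - 1))^t` closed walks.
Both bounds are `(2√(2k - 1))^t` up to subexponential factors.
-/

namespace Paper

open Finset Filter Topology

/-- The number of walks of length `t` in the `2k`-regular tree from a vertex at distance `m`
from the root to the root. -/
def treeWalks (k : ℕ) : ℕ → ℕ → ℕ
  | 0, m => if m = 0 then 1 else 0
  | t + 1, 0 => 2 * k * treeWalks k t 1
  | t + 1, m + 1 => treeWalks k t m + (2 * k - 1) * treeWalks k t (m + 2)

lemma wordElem_cons {k t : ℕ} (a : Fin k × Bool) (w : Fin t → Fin k × Bool) :
    wordElem (Fin.cons a w) = letter a * wordElem w := by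
  simp [wordElem, List.ofFn_succ]

lemma letter_inv {k : ℕ} (p : Fin k × Bool) : (letter p)⁻¹ = FreeGroup.mk [(p.1, !p.2)] := by
  obtain ⟨i, b⟩ := p
  cases b <;> simp [letter, FreeGroup.of, FreeGroup.inv_mk, FreeGroup.invRev]

lemma toWord_letter_inv_mul {k : ℕ} (p : Fin k × Bool) (g : FreeGroup (Fin k)) :
    ((letter p)⁻¹ * g).toWord = FreeGroup.reduce ((p.1, !p.2) :: g.toWord) := by
  rw [letter_inv, ← FreeGroup.mk_toWord (x := g), FreeGroup.mul_mk, FreeGroup.toWord_mk,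
    FreeGroup.mk_toWord]
  rfl

lemma sum_treeWalks_length_letter_inv_mul (k t : ℕ) (g : FreeGroup (Fin k)) :
    ∑ a : Fin k × Bool, treeWalks k t ((letter a)⁻¹ * g).toWord.length
      = treeWalks k (t + 1) g.toWord.length := by
  rcases hg : g.toWord with _ | ⟨b, l⟩
  · simp [toWord_letter_inv_mul, hg, FreeGroup.reduce, treeWalks, mul_comm]
  · have hl : FreeGroup.reduce (b :: l) = b :: l := hg ▸ FreeGroup.reduce_toWord g
    have hlen (a : Fin k × Bool) : ((letter a)⁻¹ * g).toWord.length
        = if a = b then l.length else l.length + 2 := by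
      rw [toWord_letter_inv_mul, hg, FreeGroup.reduce.cons, hl]
      by_cases h : a = b
      · simp [h]
      · have h' : ¬ (a.1 = b.1 ∧ a.2 = b.2) := fun ⟨h1, h2⟩ => h (Prod.ext h1 h2)
        simp [h, h']
    simp [hlen, apply_ite (treeWalks k t), Finset.sum_ite, Finset.filter_ne', Finset.filter_eq',
      treeWalks, mul_comm]

lemma card_wordElem_eq_succ (k t : ℕ) (g : FreeGroup (Fin k)) :
    #{w : Fin (t + 1) → Fin k × Bool | wordElem w = g}
      = ∑ a : Fin k × Bool,
          #{w : Fin t → Fin k × Bool | wordElem w = (letter a)⁻¹ * g} := by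
  rw [Finset.card_eq_sum_card_fiberwise (f := fun w => w 0) (t := Finset.univ)
    (fun _ _ => Finset.mem_univ _)]
  refine Finset.sum_congr rfl fun a _ => ?_
  refine Finset.card_bij' (fun w _ => Fin.tail w) (fun w _ => Fin.cons a w) ?_ ?_ ?_ ?_
  · intro w hw
    simp only [Finset.mem_filter, Finset.mem_univ, true_and] at hw ⊢
    rw [← hw.1, ← Fin.cons_self_tail w, wordElem_cons, hw.2, inv_mul_cancel_left]
    rfl
  · intro w hw
    simp_all [wordElem_cons]
  · intro w hw
    simp only [Finset.mem_filter, Finset.mem_univ, true_and] at hw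
    rw [← hw.2, Fin.cons_self_tail]
  · intro w _
    simp

lemma card_wordElem_eq (k t : ℕ) (g : FreeGroup (Fin k)) :
    #{w : Fin t → Fin k × Bool | wordElem w = g} = treeWalks k t g.toWord.length := by
  induction t generalizing g with
  | zero =>
    simp [wordElem, treeWalks, FreeGroup.toWord_eq_nil_iff, eq_comm, apply_ite]
  | succ t ih =>
    simp only [card_wordElem_eq_succ, ih, sum_treeWalks_length_letter_inv_mul]

/-- `t.choose (m + j) - t.choose (m + j + 1)` counts the paths in `ℕ` of length `t` from `m` to
`0` (ballot numbers); each of their `j` outward steps lifts to at least `2k - 1` steps in the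
tree. -/
lemma pow_mul_ballot_le_treeWalks (k : ℕ) {t m j : ℕ} (h : t = m + 2 * j) :
    (2 * k - 1) ^ j * (t.choose (m + j) - t.choose (m + j + 1)) ≤ treeWalks k t m := by
  induction t generalizing m j with
  | zero =>
    obtain ⟨rfl, rfl⟩ : m = 0 ∧ j = 0 := by omega
    simp [treeWalks]
  | succ t ih =>
    match m, j with
    | 0, 0 => omega
    | 0, j + 1 =>
      have hballot : (t + 1).choose (j + 1) - (t + 1).choose (j + 2)
          = t.choose (1 + j) - t.choose (1 + j + 1) := by
        have hsymm : t.choose j = t.choose (j + 1) := by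
          rw [← Nat.choose_symm (by omega : j ≤ t)]; congr 1; omega
        rw [Nat.choose_succ_succ', Nat.choose_succ_succ', add_comm 1 j, hsymm]
        omega
      calc _ = (2 * k - 1) * ((2 * k - 1) ^ j * (t.choose (1 + j) - t.choose (1 + j + 1))) := by
            rw [zero_add, hballot]; ring
        _ ≤ (2 * k - 1) * treeWalks k t 1 :=
            Nat.mul_le_mul_left _ (ih (m := 1) (j := j) (by omega))
        _ ≤ treeWalks k (t + 1) 0 := Nat.mul_le_mul_right _ (by omega)
    | m + 1, 0 =>
      obtain rfl : t = m := by omega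
      have := ih (m := t) (j := 0) (by omega)
      simp [treeWalks] at this ⊢
      omega
    | m + 1, j + 1 =>
      have ih₁ := ih (m := m) (j := j + 1) (by omega)
      have ih₂ := ih (m := m + 2) (j := j) (by omega)
      set a := m + (j + 1)
      rw [show m + 2 + j = a + 1 by omega] at ih₂
      have hpascal : (t + 1).choose (m + 1 + (j + 1)) - (t + 1).choose (m + 1 + (j + 1) + 1)
          ≤ (t.choose a - t.choose (a + 1)) + (t.choose (a + 1) - t.choose (a + 1 + 1)) := by
        rw [show m + 1 + (j + 1) = a + 1 by omega, Nat.choose_succ_succ', Nat.choose_succ_succ']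
        omega
      calc _ ≤ (2 * k - 1) ^ (j + 1) * ((t.choose a - t.choose (a + 1))
              + (t.choose (a + 1) - t.choose (a + 1 + 1))) := Nat.mul_le_mul_left _ hpascal
        _ = (2 * k - 1) ^ (j + 1) * (t.choose a - t.choose (a + 1))
            + (2 * k - 1) * ((2 * k - 1) ^ j * (t.choose (a + 1) - t.choose (a + 1 + 1))) := by
          ring
        _ ≤ treeWalks k (t + 1) (m + 1) := Nat.add_le_add ih₁ (Nat.mul_le_mul_left _ ih₂)

lemma catalan_eq_choose_sub_choose (n : ℕ) :
    catalan n = (2 * n).choose n - (2 * n).choose (n + 1) := by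
  have hstep := Nat.choose_succ_right_eq (2 * n) n
  rw [show 2 * n - n = n by omega] at hstep
  refine Nat.eq_of_mul_eq_mul_left (by omega : 0 < n + 1) ?_
  rw [succ_mul_catalan_eq_centralBinom, Nat.centralBinom_eq_two_mul_choose, Nat.mul_sub,
    mul_comm (n + 1) ((2 * n).choose (n + 1)), hstep, add_mul, one_mul, mul_comm n]
  omega

lemma catalan_mul_pow_le_treeWalks (k n : ℕ) :
    catalan n * (2 * k - 1) ^ n ≤ treeWalks k (2 * n) 0 := by
  simpa [catalan_eq_choose_sub_choose, mul_comm] using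
    pow_mul_ballot_le_treeWalks k (t := 2 * n) (m := 0) (j := n) (by ring)

lemma treeWalks_mul_pow_le {k : ℕ} (hk : 1 ≤ k) (t m : ℕ) :
    (treeWalks k t m : ℝ) * √(2 * k - 1) ^ m
      ≤ (2 * √(2 * k - 1)) ^ t * (((k : ℝ) - 1) * m + k) := by
  set β := √(2 * (k : ℝ) - 1)
  have hk' : (1 : ℝ) ≤ k := by exact_mod_cast hk
  have hβsq : β ^ 2 = 2 * k - 1 := Real.sq_sqrt (by linarith)
  have hβ : 0 < β := Real.sqrt_pos.2 (by linarith)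
  induction t generalizing m with
  | zero =>
    cases m with
    | zero => simpa [treeWalks] using hk
    | succ m => simp [treeWalks]; nlinarith
  | succ t ih =>
    cases m with
    | zero =>
      have h₁ : (treeWalks k t 1 : ℝ) ≤ (2 * β) ^ t * β := by
        refine le_of_mul_le_mul_right ?_ hβ
        calc (treeWalks k t 1 : ℝ) * β ≤ (2 * β) ^ t * (((k : ℝ) - 1) * 1 + k) := by
              simpa using ih 1
          _ = (2 * β) ^ t * β * β := by rw [mul_assoc _ β, ← sq, hβsq]; ring
      calc ((treeWalks k (t + 1) 0 : ℕ) : ℝ) * β ^ 0 = 2 * k * treeWalks k t 1 := by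
            simp [treeWalks]
        _ ≤ 2 * k * ((2 * β) ^ t * β) := by gcongr
        _ = (2 * β) ^ (t + 1) * (((k : ℝ) - 1) * (0 : ℕ) + k) := by ring
    | succ m =>
      have hcast : (((2 * k - 1 : ℕ)) : ℝ) = β ^ 2 := by
        rw [hβsq, Nat.cast_sub (by omega)]; push_cast; ring
      calc ((treeWalks k (t + 1) (m + 1) : ℕ) : ℝ) * β ^ (m + 1)
          = β * ((treeWalks k t m : ℝ) * β ^ m)
            + β * ((treeWalks k t (m + 2) : ℝ) * β ^ (m + 2)) := by
            simp only [treeWalks, Nat.cast_add, Nat.cast_mul, hcast]; ring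
        _ ≤ β * ((2 * β) ^ t * (((k : ℝ) - 1) * m + k))
            + β * ((2 * β) ^ t * (((k : ℝ) - 1) * (m + 2 : ℕ) + k)) := by
            gcongr β * ?_ + β * ?_
            · exact ih m
            · exact ih (m + 2)
        _ = (2 * β) ^ (t + 1) * (((k : ℝ) - 1) * (m + 1 : ℕ) + k) := by push_cast; ring

lemma four_mul_pow_le_treeWalks (k n : ℕ) :
    (4 * (2 * k - 1)) ^ n ≤ (2 * n + 1) ^ 2 * treeWalks k (2 * n) 0 := by
  calc (4 * (2 * k - 1)) ^ n = 4 ^ n * (2 * k - 1) ^ n := mul_pow _ _ _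
    _ ≤ ((2 * n + 1) * n.centralBinom) * (2 * k - 1) ^ n := by
      gcongr; exact Nat.four_pow_le_two_mul_add_one_mul_central_binom n
    _ = (2 * n + 1) * (n + 1) * (catalan n * (2 * k - 1) ^ n) := by
      rw [← succ_mul_catalan_eq_centralBinom]; ring
    _ ≤ (2 * n + 1) ^ 2 * treeWalks k (2 * n) 0 := by
      rw [sq]; gcongr
      · omega
      · exact catalan_mul_pow_le_treeWalks k n

lemma tendsto_const_rpow_one_div_natCast {C : ℝ} (hC : 0 < C) :
    Tendsto (fun t : ℕ => C ^ (1 / (t : ℝ))) atTop (𝓝 1) := by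
  simpa [Function.comp_def] using ((Real.continuousAt_const_rpow hC.ne').tendsto).comp
    tendsto_one_div_atTop_nhds_zero_nat

lemma tendsto_natCast_add_one_rpow_one_div :
    Tendsto (fun t : ℕ => ((t : ℝ) + 1) ^ (1 / (t : ℝ))) atTop (𝓝 1) := by
  refine ((tendsto_rpow_div_mul_add 1 1 (-1) zero_ne_one).comp
    (tendsto_atTop_add_const_right _ 1 tendsto_natCast_atTop_atTop)).congr fun t => ?_
  simp

lemma rpow_one_div_le_of_le_mul_pow {x C ρ : ℝ} {t : ℕ} (ht : t ≠ 0) (hx : 0 ≤ x)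
    (hC : 0 ≤ C) (hρ : 0 ≤ ρ) (h : x ≤ C * ρ ^ t) :
    x ^ (1 / (t : ℝ)) ≤ C ^ (1 / (t : ℝ)) * ρ := by
  calc x ^ (1 / (t : ℝ)) ≤ (C * ρ ^ t) ^ (1 / (t : ℝ)) := by gcongr
    _ = C ^ (1 / (t : ℝ)) * ρ := by
      rw [Real.mul_rpow hC (by positivity), one_div, Real.pow_rpow_inv_natCast hρ ht]

lemma le_mul_rpow_one_div_of_pow_le {x ρ : ℝ} {t d : ℕ} (ht : t ≠ 0) (hx : 0 ≤ x)
    (hρ : 0 ≤ ρ) (h : ρ ^ t ≤ ((t : ℝ) + 1) ^ d * x) :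
    ρ ≤ (((t : ℝ) + 1) ^ (1 / (t : ℝ))) ^ d * x ^ (1 / (t : ℝ)) := by
  calc ρ = (ρ ^ t) ^ (1 / (t : ℝ)) := by rw [one_div, Real.pow_rpow_inv_natCast hρ ht]
    _ ≤ (((t : ℝ) + 1) ^ d * x) ^ (1 / (t : ℝ)) := by gcongr
    _ = _ := by rw [Real.mul_rpow (by positivity) hx, Real.rpow_pow_comm (by positivity)]

lemma limsup_rpow_one_div_eq {a : ℕ → ℝ} {ρ C : ℝ} (d : ℕ) (hρ : 0 ≤ ρ) (hC : 0 < C)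
    (ha : ∀ t, 0 ≤ a t) (hup : ∀ t, a t ≤ C * ρ ^ t)
    (hlow : ∃ᶠ t : ℕ in atTop, ρ ^ t ≤ ((t : ℝ) + 1) ^ d * a t) :
    limsup (fun t : ℕ => a t ^ (1 / (t : ℝ))) atTop = ρ := by
  set u : ℕ → ℝ := fun t => a t ^ (1 / (t : ℝ))
  have hbound : Tendsto (fun t : ℕ => C ^ (1 / (t : ℝ)) * ρ) atTop (𝓝 ρ) := by
    simpa using (tendsto_const_rpow_one_div_natCast hC).mul_const ρ
  have hu_le : u ≤ᶠ[atTop] fun t => C ^ (1 / (t : ℝ)) * ρ := by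
    filter_upwards [eventually_ne_atTop 0] with t ht
    exact rpow_one_div_le_of_le_mul_pow ht (ha t) hC.le hρ (hup t)
  have hbdd : IsBoundedUnder (· ≤ ·) atTop u := hbound.isBoundedUnder_le.mono_le hu_le
  refine le_antisymm ?_ (le_of_forall_lt_imp_le_of_dense fun c hc => ?_)
  · calc limsup u atTop ≤ limsup (fun t : ℕ => C ^ (1 / (t : ℝ)) * ρ) atTop :=
          limsup_le_limsup hu_le
            (isCoboundedUnder_le_of_le atTop (f := u) fun t => Real.rpow_nonneg (ha t) _)
            hbound.isBoundedUnder_le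
      _ = ρ := hbound.limsup_eq
  · have hw :
        Tendsto (fun t : ℕ => c * (((t : ℝ) + 1) ^ (1 / (t : ℝ))) ^ d) atTop (𝓝 c) := by
      simpa using (tendsto_natCast_add_one_rpow_one_div.pow d).const_mul c
    refine le_limsup_of_frequently_le ?_ hbdd
    refine ((hlow.and_eventually (hw.eventually (gt_mem_nhds hc))).and_eventually
      (eventually_ne_atTop 0)).mono fun t ⟨⟨hlow_t, hc_t⟩, ht⟩ => ?_
    have hw_pos : 0 < (((t : ℝ) + 1) ^ (1 / (t : ℝ))) ^ d := by positivity
    have := le_mul_rpow_one_div_of_pow_le ht (ha t) hρ hlow_t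
    exact le_of_mul_le_mul_left (by nlinarith) hw_pos

/-- For every `k ≥ 1`, the number of words of length `t` in the letters
`x₁^{±1},…,x_k^{±1}` representing the trivial element of `F_k` has exponential growth rate
exactly `2√(2k−1)`. -/
theorem stmt_10 (k : ℕ) (hk : 1 ≤ k) :
    Filter.limsup (fun t : ℕ =>
        (({w : Fin t → Fin k × Bool | wordElem w = 1}).ncard : ℝ) ^ (1 / (t : ℝ)))
      Filter.atTop = 2 * Real.sqrt (2 * (k : ℝ) - 1) := by
  have hcard (t : ℕ) : (({w : Fin t → Fin k × Bool | wordElem w = 1}).ncard : ℝ)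
      = treeWalks k t 0 := by
    rw [Set.ncard_eq_toFinset_card', Set.toFinset_ofPred, card_wordElem_eq]; simp
  have hk' : (1 : ℝ) ≤ k := by exact_mod_cast hk
  have hsq : (2 * √(2 * (k : ℝ) - 1)) ^ 2 = ((4 * (2 * k - 1) : ℕ) : ℝ) := by
    rw [mul_pow, Real.sq_sqrt (by linarith), Nat.cast_mul, Nat.cast_sub (by omega)]; push_cast; ring
  simp_rw [hcard]
  refine limsup_rpow_one_div_eq 2 (by positivity) (by positivity : (0 : ℝ) < k)
    (fun t => by positivity) (fun t => by simpa [mul_comm] using treeWalks_mul_pow_le hk t 0) ?_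
  refine frequently_atTop.2 fun N => ⟨2 * N, by omega, ?_⟩
  rw [pow_mul, hsq]
  exact_mod_cast four_mul_pow_le_treeWalks k N

end Paper
end
end

section
/- Let Ω be a finite connected graph with k edges oriented and labeled x₁,…,x_k. Then for every closed path w of length t in Ω, the primitivity rank of the corresponding element of F_k satisfies π(w) ∈ {0, 1, …, rk(Ω)} ∪ {∞}, where rk(Ω) = |E(Ω)| − |V(Ω)| + 1 is the rank of the fundamental group of Ω. -/
open scoped Classical

noncomputable section

/-!
Choose a spanning tree of `Ω` rooted at `v` and let `p u` be the word of the tree path from `v`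
to `u`. Replacing each letter `x_e` of a non-tree edge by its fundamental cycle
`p (src e) * x_e * (p (tgt e))⁻¹` is a change of basis of `F_k`, because the words `p u` only
involve tree letters. Hence the fundamental cycles span a free factor `J_v` of `F_k` of rank
`|E| - (|V| - 1) = rk Ω`, and it contains the word `w` of every closed path at `v`.

If `w` is not primitive in `J_v`, then `π(w) ≤ rk J_v ≤ rk Ω`. Otherwise a basis of `J_v`
through `w` extends to a basis of `F_k`, and an element of a basis of a free group is primitive
in every subgroup `J` containing it, so `π(w) = ∞`. The last fact is Schreier's argument, run
through the same construction: `J` is the fundamental group of its Schreier coset graph, whose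
fundamental cycles form a basis of `J`, and the loop at the base coset labelled by the basis
element is never a tree edge.
-/

namespace FreeGroupBasis

open Paper

variable {G ι κ : Type*} [Group G]

theorem isFreeBasisOf {H : Subgroup G} (b : FreeGroupBasis ι H) :
    IsFreeBasisOf (Set.range fun i => (b i : G)) H := by
  have hb : Function.Injective fun i => (b i : G) := Subtype.val_injective.comp b.injective
  have hlift : FreeGroup.lift (fun s : Set.range (fun i => (b i : G)) => (s : G)) =
      H.subtype.comp
        ((FreeGroup.freeGroupCongr (Equiv.ofInjective _ hb).symm).trans b.repr.symm) := by
    ext s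
    simp only [MonoidHom.coe_comp, Function.comp_apply, FreeGroup.lift_apply_of]
    exact (Equiv.apply_ofInjective_symm hb s).symm
  refine ⟨?_, ?_⟩
  · rw [hlift]
    exact Subtype.val_injective.comp (MulEquiv.injective _)
  · rw [hlift, MonoidHom.range_comp, MonoidHom.range_eq_top.mpr (MulEquiv.surjective _),
      ← MonoidHom.range_eq_map, Subgroup.range_subtype]

theorem isPrimitiveIn {H : Subgroup G} (b : FreeGroupBasis ι H) (i : ι) :
    IsPrimitiveIn (b i : G) H :=
  ⟨_, b.isFreeBasisOf, Set.mem_range_self i⟩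

theorem subgroupRank_le {H : Subgroup G} (b : FreeGroupBasis ι H) :
    subgroupRank H ≤ ENat.card ι :=
  calc subgroupRank H ≤ (Set.range fun i => (b i : G)).encard :=
      biInf_le _ b.isFreeBasisOf
    _ ≤ ENat.card ι := by
      rw [← Set.image_univ, ← Set.encard_univ]
      exact Set.encard_image_le _ _

def restrict (b : FreeGroupBasis ι G) (A : Set ι) :
    FreeGroupBasis A (Subgroup.closure (b '' A)) :=
  have hinj : Function.Injective (FreeGroup.lift fun a : A => b a) := by
    have : FreeGroup.lift (fun a : A => b a) =
        b.repr.symm.toMonoidHom.comp (FreeGroup.map Subtype.val) := by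
      ext
      exact FreeGroup.lift_apply_of
    rw [this]
    exact b.repr.symm.injective.comp (FreeGroup.map_injective Subtype.val_injective)
  have hrange : (FreeGroup.lift fun a : A => b a).range = Subgroup.closure (b '' A) := by
    rw [FreeGroup.range_lift_eq_closure, Set.image_eq_range]
  .ofRepr ((MonoidHom.ofInjective hinj).trans (MulEquiv.subgroupCongr hrange)).symm

@[simp]
theorem restrict_apply (b : FreeGroupBasis ι G) (A : Set ι) (a : A) :
    (b.restrict A a : G) = b a :=
  FreeGroup.lift_apply_of

/-- The basis of `G` made of `c` and the elements `b i` with `i ∉ A`. -/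
def extend (b : FreeGroupBasis ι G) {A : Set ι}
    (c : FreeGroupBasis κ (Subgroup.closure (b '' A))) : FreeGroupBasis (κ ⊕ ↥Aᶜ) G :=
  let φ : FreeGroup (κ ⊕ ↥Aᶜ) →* G := FreeGroup.lift (Sum.elim (fun j => c j) fun i => b i)
  let ψ : G →* FreeGroup (κ ⊕ ↥Aᶜ) := b.lift fun i =>
    if h : i ∈ A then FreeGroup.map Sum.inl (c.repr ⟨b i, Subgroup.subset_closure ⟨i, h, rfl⟩⟩)
    else FreeGroup.of (Sum.inr ⟨i, h⟩)
  have hφ : φ.comp (FreeGroup.map Sum.inl) =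
      (Subgroup.subtype _).comp c.repr.symm.toMonoidHom := by
    ext
    exact FreeGroup.lift_apply_of
  have hψ : ψ.comp (Subgroup.subtype _) = (FreeGroup.map Sum.inl).comp c.repr.toMonoidHom := by
    refine (b.restrict A).ext_hom _ _ fun a => ?_
    simp only [MonoidHom.comp_apply, Subgroup.subtype_apply, restrict_apply, ψ,
      lift_apply_apply, repr_apply_coe, FreeGroup.lift_apply_of, dif_pos a.2]
    rw [MulEquiv.coe_toMonoidHom,
      show b.restrict A a = ⟨b a, _⟩ from Subtype.ext (restrict_apply b A a)]
  .ofRepr <| MonoidHom.toMulEquiv ψ φ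
    (by
      refine b.ext_hom _ _ fun i => ?_
      simp only [MonoidHom.comp_apply, MonoidHom.id_apply, ψ, lift_apply_apply, repr_apply_coe,
        FreeGroup.lift_apply_of]
      split_ifs with h
      · simpa using DFunLike.congr_fun hφ (c.repr ⟨b i, Subgroup.subset_closure ⟨i, h, rfl⟩⟩)
      · simp [φ])
    (by
      ext (j | i)
      · simpa [φ] using DFunLike.congr_fun hψ (c j)
      · simp only [MonoidHom.comp_apply, MonoidHom.id_apply, φ, FreeGroup.lift_apply_of,
          Sum.elim_inr, ψ, lift_apply_apply, repr_apply_coe, dif_neg i.2])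

@[simp]
theorem extend_apply_inl (b : FreeGroupBasis ι G) {A : Set ι}
    (c : FreeGroupBasis κ (Subgroup.closure (b '' A))) (j : κ) :
    b.extend c (.inl j) = c j :=
  FreeGroup.lift_apply_of

end FreeGroupBasis

namespace Paper

section FreeBases

variable {G : Type*} [Group G]

def IsFreeBasisOf.freeGroupBasis {S : Set G} {H : Subgroup G} (h : IsFreeBasisOf S H) :
    FreeGroupBasis S H :=
  .ofRepr <| MulEquiv.symm <| MulEquiv.ofBijective
    ((FreeGroup.lift fun s : S => (s : G)).codRestrict H fun x => h.2 ▸ ⟨x, rfl⟩)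
    ⟨fun x y hxy => h.1 (congrArg Subtype.val hxy), fun y => by
      obtain ⟨x, hx⟩ : (y : G) ∈ (FreeGroup.lift fun s : S => (s : G)).range := h.2 ▸ y.2
      exact ⟨x, Subtype.ext hx⟩⟩

theorem IsFreeBasisOf.freeGroupBasis_apply {S : Set G} {H : Subgroup G} (h : IsFreeBasisOf S H)
    (s : S) : (h.freeGroupBasis s : G) = s :=
  FreeGroup.lift_apply_of

theorem IsPrimitiveIn.exists_freeGroupBasis {w : G} {H : Subgroup G} (h : IsPrimitiveIn w H) :
    ∃ (S : Set G) (b : FreeGroupBasis S H) (s : S), (b s : G) = w := by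
  obtain ⟨S, hS, hw⟩ := h
  exact ⟨S, hS.freeGroupBasis, ⟨w, hw⟩, hS.freeGroupBasis_apply _⟩

theorem primRank_le_subgroupRank {w : G} {J : Subgroup G} (hw : w ∈ J)
    (hprim : ¬IsPrimitiveIn w J) : primRank w ≤ subgroupRank J :=
  iInf₂_le J ⟨hw, hprim⟩

theorem primRank_eq_top {w : G} (h : ∀ J : Subgroup G, w ∈ J → IsPrimitiveIn w J) :
    primRank w = ⊤ :=
  iInf₂_eq_top.mpr fun J hJ => (hJ.2 (h J hJ.1)).elim

theorem smul_coe_one_eq_iff {J : Subgroup G} {g : G} :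
    g • ((1 : G) : G ⧸ J) = ((1 : G) : G ⧸ J) ↔ g ∈ J := by
  rw [← MulAction.mem_stabilizer_iff, MulAction.stabilizer_quotient]

end FreeBases

structure OrientedGraph (V E : Type*) where
  src : E → V
  tgt : E → V

def stepWord {E : Type*} (s : E × Bool) : FreeGroup E :=
  if s.2 then FreeGroup.of s.1 else (FreeGroup.of s.1)⁻¹

namespace OrientedGraph

variable {V E : Type*} (Γ : OrientedGraph V E)

def stepStart (s : E × Bool) : V := if s.2 then Γ.src s.1 else Γ.tgt s.1

def stepEnd (s : E × Bool) : V := if s.2 then Γ.tgt s.1 else Γ.src s.1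

def Adjacent (u w : V) : Prop :=
  ∃ e, (Γ.src e = u ∧ Γ.tgt e = w) ∨ (Γ.src e = w ∧ Γ.tgt e = u)

variable {Γ}

theorem Adjacent.symm {u w : V} (h : Γ.Adjacent u w) : Γ.Adjacent w u := by
  obtain ⟨e, h⟩ := h
  exact ⟨e, h.symm⟩

theorem Adjacent.exists_step {u w : V} (h : Γ.Adjacent u w) :
    ∃ s : E × Bool, Γ.stepStart s = u ∧ Γ.stepEnd s = w := by
  obtain ⟨e, ⟨rfl, rfl⟩ | ⟨rfl, rfl⟩⟩ := h
  exacts [⟨(e, true), rfl, rfl⟩, ⟨(e, false), rfl, rfl⟩]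

variable (Γ)

theorem stepEnd_eq_or_of_fst_eq {s s' : E × Bool} (h : s.1 = s'.1) :
    Γ.stepEnd s = Γ.stepEnd s' ∨ Γ.stepEnd s = Γ.stepStart s' ∧ Γ.stepStart s = Γ.stepEnd s' := by
  obtain ⟨e, b⟩ := s
  obtain ⟨e', b'⟩ := s'
  subst h
  cases b <;> cases b' <;> simp [stepStart, stepEnd]

theorem stepStart_eq_stepEnd {s : E × Bool} (h : Γ.src s.1 = Γ.tgt s.1) :
    Γ.stepStart s = Γ.stepEnd s := by
  unfold stepStart stepEnd
  split_ifs <;> simp [h]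

/-- A spanning tree rooted at `r`, recorded by the step `parentStep u` through which the tree
path from `r` enters each vertex `u ≠ r`. -/
structure SpanningTree (r : V) where
  depth : V → ℕ
  parentStep : ∀ u, u ≠ r → E × Bool
  stepEnd_parentStep : ∀ u hu, Γ.stepEnd (parentStep u hu) = u
  depth_lt : ∀ u hu, depth (Γ.stepStart (parentStep u hu)) < depth u

theorem nonempty_spanningTree {r : V} (h : ∀ u, Relation.ReflTransGen Γ.Adjacent r u) :
    Nonempty (Γ.SpanningTree r) := by
  let G := SimpleGraph.fromRel Γ.Adjacent
  have hreach : ∀ u, G.Reachable u r := fun u => by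
    induction h u with
    | refl => rfl
    | @tail w u _ hwu ih =>
      by_cases hwu' : w = u
      · exact hwu' ▸ ih
      · exact (SimpleGraph.Adj.reachable (G := G) ⟨Ne.symm hwu', Or.inr hwu⟩).trans ih
  -- the parent of `u` is the next vertex on a shortest walk from `u` to `r`
  have hstep : ∀ u, u ≠ r → ∃ s : E × Bool,
      Γ.stepEnd s = u ∧ G.dist (Γ.stepStart s) r < G.dist u r := by
    intro u hu
    obtain ⟨p, hp⟩ := (hreach u).exists_walk_length_eq_dist
    match p, hp with
    | .nil, _ => exact absurd rfl hu
    | .cons (v := w) hadj q, hp =>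
      obtain ⟨s, rfl, rfl⟩ := (hadj.2.elim Adjacent.symm id : Γ.Adjacent w u).exists_step
      refine ⟨s, rfl, ?_⟩
      have := SimpleGraph.dist_le q
      rw [SimpleGraph.Walk.length_cons] at hp
      omega
  choose parent hparent using hstep
  exact ⟨⟨fun u => G.dist u r, parent, fun u hu => (hparent u hu).1,
    fun u hu => (hparent u hu).2⟩⟩

namespace SpanningTree

variable {Γ} {r : V} (T : Γ.SpanningTree r)

def parent (u : V) (hu : u ≠ r) : V := Γ.stepStart (T.parentStep u hu)

theorem induction {P : V → Prop} (root : P r) (step : ∀ u hu, P (T.parent u hu) → P u) (u : V) :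
    P u := by
  induction hd : T.depth u using Nat.strong_induction_on generalizing u with
  | _ n ih =>
    by_cases hu : u = r
    · exact hu ▸ root
    · exact step u hu (ih _ (hd ▸ T.depth_lt u hu) _ rfl)

def rootPath (u : V) : FreeGroup E :=
  if hu : u = r then 1 else rootPath (T.parent u hu) * stepWord (T.parentStep u hu)
termination_by T.depth u
decreasing_by exact T.depth_lt u hu

@[simp]
theorem rootPath_root : T.rootPath r = 1 := by
  rw [rootPath, dif_pos rfl]

theorem rootPath_of_ne {u : V} (hu : u ≠ r) :
    T.rootPath u = T.rootPath (T.parent u hu) * stepWord (T.parentStep u hu) := by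
  rw [rootPath, dif_neg hu]

def edge (u : {u // u ≠ r}) : E := (T.parentStep u u.2).1

def edges : Set E := Set.range T.edge

theorem edge_injective : Function.Injective T.edge := by
  rintro ⟨u, hu⟩ ⟨w, hw⟩ h
  have hu' := T.stepEnd_parentStep u hu
  have hw' := T.stepEnd_parentStep w hw
  rcases Γ.stepEnd_eq_or_of_fst_eq h with h | ⟨h₁, h₂⟩
  · exact Subtype.ext (hu'.symm.trans (h.trans hw'))
  · have h₃ := T.depth_lt u hu
    have h₄ := T.depth_lt w hw
    rw [h₂, hw'] at h₃
    rw [← h₁, hu'] at h₄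
    omega

theorem notMem_edges_of_src_eq_tgt {e : E} (he : Γ.src e = Γ.tgt e) : e ∉ T.edges := by
  rintro ⟨⟨u, hu⟩, rfl⟩
  have h := T.depth_lt u hu
  rw [Γ.stepStart_eq_stepEnd he, T.stepEnd_parentStep] at h
  exact lt_irrefl _ h

def cycle (e : E) : FreeGroup E :=
  T.rootPath (Γ.src e) * FreeGroup.of e * (T.rootPath (Γ.tgt e))⁻¹

theorem rootPath_mul_stepWord_mul_inv (s : E × Bool) :
    T.rootPath (Γ.stepStart s) * stepWord s * (T.rootPath (Γ.stepEnd s))⁻¹ =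
      if s.2 then T.cycle s.1 else (T.cycle s.1)⁻¹ := by
  obtain ⟨e, _ | _⟩ := s <;> simp [stepStart, stepEnd, stepWord, cycle, mul_assoc]

theorem cycle_eq_one {e : E} (he : e ∈ T.edges) : T.cycle e = 1 := by
  obtain ⟨⟨u, hu⟩, rfl⟩ := he
  have h := T.rootPath_mul_stepWord_mul_inv (T.parentStep u hu)
  rw [T.stepEnd_parentStep, T.rootPath_of_ne hu, parent, mul_inv_cancel] at h
  split_ifs at h <;> simpa [edge, eq_comm] using h

theorem map_rootPath {f : FreeGroup E →* FreeGroup E}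
    (hf : ∀ e ∈ T.edges, f (FreeGroup.of e) = FreeGroup.of e) (u : V) :
    f (T.rootPath u) = T.rootPath u := by
  induction u using T.induction with
  | root => simp
  | step u hu ih =>
    have he := hf _ ⟨⟨u, hu⟩, rfl⟩
    rw [T.rootPath_of_ne hu, map_mul, ih, stepWord]
    split_ifs <;> simp_all [edge]

def basis : FreeGroupBasis E (FreeGroup E) :=
  let ψ := FreeGroup.lift fun e => if e ∈ T.edges then FreeGroup.of e else T.cycle e
  let ψ' := FreeGroup.lift fun e => if e ∈ T.edges then FreeGroup.of e else
    (T.rootPath (Γ.src e))⁻¹ * FreeGroup.of e * T.rootPath (Γ.tgt e)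
  -- both fix the words `T.rootPath u`, which only involve tree letters, so they are inverse
  have hψ := T.map_rootPath (f := ψ) fun e he => by simp [ψ, he]
  have hψ' := T.map_rootPath (f := ψ') fun e he => by simp [ψ', he]
  .ofRepr <| MonoidHom.toMulEquiv ψ' ψ
    (by
      ext e
      by_cases he : e ∈ T.edges
      · simp [ψ, ψ', he]
      · simp only [MonoidHom.comp_apply, MonoidHom.id_apply, ψ', FreeGroup.lift_apply_of,
          if_neg he, map_mul, map_inv, hψ]
        simp [ψ, he, cycle, mul_assoc])
    (by
      ext e
      by_cases he : e ∈ T.edges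
      · simp [ψ, ψ', he]
      · simp only [MonoidHom.comp_apply, MonoidHom.id_apply, ψ, FreeGroup.lift_apply_of,
          if_neg he, cycle, map_mul, map_inv, hψ']
        simp [ψ', he, mul_assoc])

theorem basis_apply_of_notMem {e : E} (he : e ∉ T.edges) : T.basis e = T.cycle e :=
  FreeGroup.lift_apply_of.trans (if_neg he)

abbrev cycleSubgroup : Subgroup (FreeGroup E) := Subgroup.closure (T.basis '' T.edgesᶜ)

theorem cycle_mem_cycleSubgroup (e : E) : T.cycle e ∈ T.cycleSubgroup := by
  by_cases he : e ∈ T.edges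
  · rw [T.cycle_eq_one he]
    exact one_mem _
  · exact Subgroup.subset_closure ⟨e, he, T.basis_apply_of_notMem he⟩

theorem rootPath_mul_stepWord_mul_inv_mem (s : E × Bool) :
    T.rootPath (Γ.stepStart s) * stepWord s * (T.rootPath (Γ.stepEnd s))⁻¹ ∈
      T.cycleSubgroup := by
  rw [rootPath_mul_stepWord_mul_inv]
  split_ifs
  exacts [T.cycle_mem_cycleSubgroup _, inv_mem (T.cycle_mem_cycleSubgroup _)]

end SpanningTree

end OrientedGraph

section Schreier

open OrientedGraph

variable {α : Type*} (J : Subgroup (FreeGroup α))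

/-- The Schreier coset graph of `J`. The edge `(c, a)` runs from `c` to `a⁻¹ • c`, so that
reading a word from left to right traces a path. -/
def schreierGraph : OrientedGraph (FreeGroup α ⧸ J) ((FreeGroup α ⧸ J) × α) where
  src e := e.1
  tgt e := (FreeGroup.of e.2)⁻¹ • e.1

/-- The semidirect product packages the rule
`schreierLift (g * h) c = schreierLift g c * schreierLift h (g⁻¹ • c)` into a homomorphism. -/
def schreierScan : FreeGroup α →*
    (FreeGroup α ⧸ J → FreeGroup ((FreeGroup α ⧸ J) × α)) ⋊[mulAutArrow] FreeGroup α :=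
  FreeGroup.lift fun a => ⟨fun c => FreeGroup.of (c, a), FreeGroup.of a⟩

/-- The edge word of the path that starts at `c` and reads `g`. -/
def schreierLift (g : FreeGroup α) (c : FreeGroup α ⧸ J) : FreeGroup ((FreeGroup α ⧸ J) × α) :=
  (schreierScan J g).left c

theorem schreierScan_right (g : FreeGroup α) : (schreierScan J g).right = g := by
  have : SemidirectProduct.rightHom.comp (schreierScan J) = MonoidHom.id _ :=
    FreeGroup.ext_hom _ _ fun a => by simp [schreierScan]
  exact DFunLike.congr_fun this g

theorem schreierLift_mul (g h : FreeGroup α) (c : FreeGroup α ⧸ J) :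
    schreierLift J (g * h) c = schreierLift J g c * schreierLift J h (g⁻¹ • c) := by
  rw [schreierLift, map_mul, SemidirectProduct.mul_left, Pi.mul_apply, mulAutArrow_apply_apply,
    schreierScan_right]
  rfl

@[simp]
theorem schreierLift_one (c : FreeGroup α ⧸ J) : schreierLift J 1 c = 1 := by
  simp [schreierLift]

theorem schreierLift_of (a : α) (c : FreeGroup α ⧸ J) :
    schreierLift J (FreeGroup.of a) c = FreeGroup.of (c, a) := by
  simp [schreierLift, schreierScan]

theorem schreierLift_inv (g : FreeGroup α) (c : FreeGroup α ⧸ J) :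
    schreierLift J g⁻¹ c = (schreierLift J g (g • c))⁻¹ := by
  have h := schreierLift_mul J g g⁻¹ (g • c)
  rw [mul_inv_cancel, inv_smul_smul, schreierLift_one] at h
  exact eq_inv_of_mul_eq_one_right h.symm

theorem map_snd_schreierLift (g : FreeGroup α) (c : FreeGroup α ⧸ J) :
    FreeGroup.map Prod.snd (schreierLift J g c) = g := by
  induction g using FreeGroup.induction_on generalizing c with
  | C1 => simp
  | of a => simp [schreierLift_of]
  | inv_of a ih => simp [schreierLift_inv, ih]
  | mul x y hx hy => simp [schreierLift_mul, hx, hy]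

theorem schreierGraph_reflTransGen_adjacent (g : FreeGroup α) (c : FreeGroup α ⧸ J) :
    Relation.ReflTransGen (schreierGraph J).Adjacent c (g • c) := by
  induction g using FreeGroup.induction_on generalizing c with
  | C1 => rw [one_smul]
  | of a => exact .single ⟨(FreeGroup.of a • c, a), Or.inr ⟨rfl, inv_smul_smul _ c⟩⟩
  | inv_of a _ => exact .single ⟨(c, a), Or.inl ⟨rfl, rfl⟩⟩
  | mul x y hx hy => exact (hy c).trans (mul_smul x y c ▸ hx (y • c))

/-- `x` is the edge word of a path from `c` to `d`: it is the lift at `c` of its label. -/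
def IsLiftedPath (c d : FreeGroup α ⧸ J) (x : FreeGroup ((FreeGroup α ⧸ J) × α)) : Prop :=
  schreierLift J (FreeGroup.map Prod.snd x) c = x ∧ (FreeGroup.map Prod.snd x)⁻¹ • c = d

variable {J}

theorem IsLiftedPath.mul {c d f : FreeGroup α ⧸ J} {x y : FreeGroup ((FreeGroup α ⧸ J) × α)}
    (hx : IsLiftedPath J c d x) (hy : IsLiftedPath J d f y) : IsLiftedPath J c f (x * y) := by
  obtain ⟨hx, rfl⟩ := hx
  obtain ⟨hy, rfl⟩ := hy
  refine ⟨?_, ?_⟩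
  · rw [map_mul, schreierLift_mul, hx, hy]
  · rw [map_mul, mul_inv_rev, mul_smul]

theorem IsLiftedPath.inv {c d : FreeGroup α ⧸ J} {x : FreeGroup ((FreeGroup α ⧸ J) × α)}
    (hx : IsLiftedPath J c d x) : IsLiftedPath J d c x⁻¹ := by
  obtain ⟨hx, rfl⟩ := hx
  refine ⟨?_, ?_⟩
  · rw [map_inv, schreierLift_inv, smul_inv_smul, hx]
  · rw [map_inv, inv_inv, smul_inv_smul]

variable (J) in
theorem isLiftedPath_stepWord (s : ((FreeGroup α ⧸ J) × α) × Bool) :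
    IsLiftedPath J ((schreierGraph J).stepStart s) ((schreierGraph J).stepEnd s) (stepWord s) := by
  obtain ⟨⟨c, a⟩, b⟩ := s
  have h : IsLiftedPath J c ((FreeGroup.of a)⁻¹ • c) (FreeGroup.of (c, a)) :=
    ⟨by simp [schreierLift_of], by simp⟩
  cases b
  exacts [h.inv, h]

section SpanningTree

variable {r : FreeGroup α ⧸ J} (T : (schreierGraph J).SpanningTree r)

theorem isLiftedPath_rootPath (u : FreeGroup α ⧸ J) : IsLiftedPath J r u (T.rootPath u) := by
  induction u using T.induction with
  | root => exact ⟨by simp, by simp⟩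
  | step u hu ih =>
    have := ih.mul (isLiftedPath_stepWord J (T.parentStep u hu))
    rwa [T.stepEnd_parentStep, ← T.rootPath_of_ne hu] at this

theorem isLiftedPath_of_mem_cycleSubgroup {x : FreeGroup ((FreeGroup α ⧸ J) × α)}
    (hx : x ∈ T.cycleSubgroup) : IsLiftedPath J r r x := by
  induction hx using Subgroup.closure_induction with
  | mem x hx =>
    obtain ⟨e, he, rfl⟩ := hx
    rw [T.basis_apply_of_notMem he]
    exact ((isLiftedPath_rootPath T _).mul (isLiftedPath_stepWord J (e, true))).mul
      (isLiftedPath_rootPath T _).inv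
  | one => exact ⟨by simp, by simp⟩
  | mul x y _ _ hx hy => exact hx.mul hy
  | inv x _ hx => exact hx.inv

theorem rootPath_mul_schreierLift_mul_inv_mem (g : FreeGroup α) (c : FreeGroup α ⧸ J) :
    T.rootPath c * schreierLift J g c * (T.rootPath (g⁻¹ • c))⁻¹ ∈ T.cycleSubgroup := by
  induction g using FreeGroup.induction_on generalizing c with
  | C1 => simp
  | of a =>
    rw [schreierLift_of]
    exact T.rootPath_mul_stepWord_mul_inv_mem ((c, a), true)
  | inv_of a _ =>
    have := T.rootPath_mul_stepWord_mul_inv_mem ((FreeGroup.of a • c, a), false)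
    simp only [schreierGraph, stepStart, stepEnd, stepWord, Bool.false_eq_true, ↓reduceIte,
      inv_smul_smul] at this
    rw [schreierLift_inv, schreierLift_of, inv_inv]
    exact this
  | mul x y hx hy =>
    rw [schreierLift_mul, mul_inv_rev, mul_smul]
    convert mul_mem (hx c) (hy (x⁻¹ • c)) using 1
    group

end SpanningTree

variable (T : (schreierGraph J).SpanningTree ((1 : FreeGroup α) : FreeGroup α ⧸ J))

theorem injective_map_snd_comp_subtype :
    Function.Injective ((FreeGroup.map Prod.snd).comp T.cycleSubgroup.subtype) :=
  fun x y hxy => Subtype.ext <| by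
    rw [← (isLiftedPath_of_mem_cycleSubgroup T x.2).1,
      ← (isLiftedPath_of_mem_cycleSubgroup T y.2).1]
    exact congrArg (schreierLift J · _) hxy

theorem range_map_snd_comp_subtype :
    ((FreeGroup.map Prod.snd).comp T.cycleSubgroup.subtype).range = J := by
  apply le_antisymm
  · rintro _ ⟨x, rfl⟩
    exact inv_mem_iff.mp (smul_coe_one_eq_iff.mp (isLiftedPath_of_mem_cycleSubgroup T x.2).2)
  · intro g hg
    have := rootPath_mul_schreierLift_mul_inv_mem T g ((1 : FreeGroup α) : FreeGroup α ⧸ J)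
    rw [smul_coe_one_eq_iff.mpr (inv_mem hg), T.rootPath_root, one_mul, inv_one,
      mul_one] at this
    exact ⟨⟨_, this⟩, map_snd_schreierLift J g _⟩

def cycleSubgroupEquiv : T.cycleSubgroup ≃* J :=
  (MonoidHom.ofInjective (injective_map_snd_comp_subtype T)).trans
    (MulEquiv.subgroupCongr (range_map_snd_comp_subtype T))

theorem coe_cycleSubgroupEquiv (x : T.cycleSubgroup) :
    (cycleSubgroupEquiv T x : FreeGroup α) =
      FreeGroup.map Prod.snd (x : FreeGroup ((FreeGroup α ⧸ J) × α)) :=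
  rfl

end Schreier

universe u in
theorem exists_freeGroupBasis_apply_eq_of {α : Type u} {J : Subgroup (FreeGroup α)} {a : α}
    (ha : FreeGroup.of a ∈ J) :
    ∃ (ι : Type u) (b : FreeGroupBasis ι J) (i : ι), (b i : FreeGroup α) = FreeGroup.of a := by
  set r : FreeGroup α ⧸ J := ((1 : FreeGroup α) : FreeGroup α ⧸ J)
  obtain ⟨T⟩ := (schreierGraph J).nonempty_spanningTree (r := r) fun c => by
    obtain ⟨g, rfl⟩ := QuotientGroup.mk_surjective c
    simpa [r] using schreierGraph_reflTransGen_adjacent J g r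
  have hsrc : (schreierGraph J).src (r, a) = r := rfl
  have htgt : (schreierGraph J).tgt (r, a) = r := smul_coe_one_eq_iff.mpr (inv_mem ha)
  have hloop : (r, a) ∉ T.edges := T.notMem_edges_of_src_eq_tgt (hsrc.trans htgt.symm)
  refine ⟨_, (T.basis.restrict T.edgesᶜ).map (cycleSubgroupEquiv T), ⟨(r, a), hloop⟩, ?_⟩
  rw [FreeGroupBasis.map_apply, coe_cycleSubgroupEquiv, FreeGroupBasis.restrict_apply,
    T.basis_apply_of_notMem hloop, OrientedGraph.SpanningTree.cycle, hsrc, htgt]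
  simp

theorem _root_.FreeGroupBasis.isPrimitiveIn_of_mem {G ι : Type*} [Group G]
    (b : FreeGroupBasis ι G) (i : ι) {J : Subgroup G} (hi : b i ∈ J) : IsPrimitiveIn (b i) J := by
  obtain ⟨κ, c, j, hj⟩ := exists_freeGroupBasis_apply_eq_of
    (J := J.map (b.repr : G →* FreeGroup ι)) ⟨b i, hi, b.repr_apply_coe i⟩
  have := (c.map (b.repr.subgroupMap J).symm).isPrimitiveIn j
  simp only [FreeGroupBasis.map_apply, MulEquiv.subgroupMap_symm_apply, hj] at this
  exact this

namespace MultiGraph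

def toOrientedGraph (Ω : MultiGraph) : OrientedGraph Ω.V (Fin Ω.k) := ⟨Ω.src, Ω.tgt⟩

variable (Ω : MultiGraph) {r : Ω.V} (T : Ω.toOrientedGraph.SpanningTree r)

theorem rootPath_mul_pathWord_mul_inv_mem {u₁ u₂ : Ω.V} {l : List (Fin Ω.k × Bool)}
    (hl : Ω.IsPathFrom u₁ u₂ l) :
    T.rootPath u₁ * Ω.pathWord l * (T.rootPath u₂)⁻¹ ∈ T.cycleSubgroup := by
  induction l generalizing u₁ with
  | nil =>
    cases hl
    simp [pathWord]
  | cons s l ih =>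
    obtain ⟨rfl, hl⟩ := hl
    have hs : T.rootPath (Ω.stepStart s) * letter s * (T.rootPath (Ω.stepEnd s))⁻¹ ∈
        T.cycleSubgroup :=
      T.rootPath_mul_stepWord_mul_inv_mem s
    convert mul_mem hs (ih hl) using 1
    simp only [pathWord, List.map_cons, List.prod_cons]
    group

theorem encard_compl_edges_le : T.edgesᶜ.encard ≤ Ω.rk := by
  have hcard : T.edges.ncard = Fintype.card Ω.V - 1 := by
    rw [OrientedGraph.SpanningTree.edges, Set.ncard_range_of_injective T.edge_injective]
    simp
  have hsum := Set.ncard_add_ncard_compl T.edges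
  have hpos : 0 < Fintype.card Ω.V := Fintype.card_pos_iff.2 ⟨r⟩
  rw [← Set.Finite.cast_ncard_eq (Set.toFinite _), rk, Nat.cast_le]
  simp only [Nat.card_eq_fintype_card, Fintype.card_fin] at hsum
  omega

end MultiGraph

/-- Let `Ω` be a finite connected graph with `k` oriented labeled edges.
Then for every closed path `w` in `Ω`, the primitivity rank of the corresponding element of
`F_k` satisfies `π(w) ∈ {0,1,…,rk(Ω)} ∪ {∞}`, where `rk(Ω) = |E(Ω)| − |V(Ω)| + 1`. -/
theorem stmt_11 (Ω : MultiGraph) (hconn : Ω.Connected)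
    (v : Ω.V) (l : List (Fin Ω.k × Bool)) (hl : Ω.IsPathFrom v v l) :
    primRank (Ω.pathWord l) = ⊤ ∨ primRank (Ω.pathWord l) ≤ (Ω.rk : ℕ∞) := by
  obtain ⟨T⟩ := Ω.toOrientedGraph.nonempty_spanningTree (hconn.2 v)
  have hw : Ω.pathWord l ∈ T.cycleSubgroup := by
    simpa using Ω.rootPath_mul_pathWord_mul_inv_mem T hl
  by_cases hprim : IsPrimitiveIn (Ω.pathWord l) T.cycleSubgroup
  · left
    obtain ⟨S, c, s, hs⟩ := hprim.exists_freeGroupBasis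
    refine primRank_eq_top fun J hJ => ?_
    have := (T.basis.extend (A := T.edgesᶜ) c).isPrimitiveIn_of_mem (.inl s) (J := J)
    rw [FreeGroupBasis.extend_apply_inl, hs] at this
    exact this hJ
  · right
    calc primRank _ ≤ subgroupRank T.cycleSubgroup := primRank_le_subgroupRank hw hprim
      _ ≤ ENat.card ↥T.edgesᶜ := (T.basis.restrict _).subgroupRank_le
      _ ≤ Ω.rk := by
        rw [ENat.card_coe_set_eq]
        exact Ω.encard_compl_edges_le T

end Paper
end
end
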